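/- Let N ≥ 2, 0 < ε < π/2, and let α, β ∈ ℝ satisfy α > 0 and α + β > 0. Then there exists a constant C > 0, depending only on ε, α, β, such that for every λ ∈ Σ_ε and every ξ' ∈ ℝ^{N−1}: |B − A| ≤ C |λ| (|λ|^{1/2} + |ξ'|)^{−1}. -/

import Mathlib

lemma sector_add (γ : ℝ) (hγ0 : 0 ≤ γ) (hγ1 : γ < 1) (z : ℂ) (t : ℝ)
    (ht : 0 ≤ t) (hre : -(γ * ‖z‖) ≤ z.re) :
    (1-γ)/2 * (‖z‖ + t) ≤ ‖z + (t:ℂ)‖ + (z + (t:ℂ)).re := by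
  set r := ‖z‖ with hrdef
  set a := ‖z + (t:ℂ)‖ with hadef
  have hr : 0 ≤ r := norm_nonneg z
  have ha : 0 ≤ a := norm_nonneg _
  have hsq : a^2 = r^2 + 2*t*z.re + t^2 := by
    rw [hadef, hrdef, Complex.sq_norm, Complex.sq_norm, Complex.normSq_apply, Complex.normSq_apply]
    simp only [Complex.add_re, Complex.add_im, Complex.ofReal_re, Complex.ofReal_im]
    ring
  have hzr : z.re ≤ r := Complex.re_le_norm z
  have hre2 : (z + (t:ℂ)).re = z.re + t := by simp
  rw [hre2]
  set d : ℝ := (1-γ)/2 with hddef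
  have hd0 : 0 < d := by rw [hddef]; linarith
  have hd2 : d ≤ 1/2 := by rw [hddef]; linarith
  rcases le_or_gt 0 z.re with hc | hc
  · have har : r ≤ a := by nlinarith
    nlinarith
  · set u : ℝ := -z.re with hudef
    have hu : 0 < u := by rw [hudef]; linarith
    set R : ℝ := d*(r+t) + u - t with hRdef
    rcases le_or_gt R 0 with hR | hR
    · linarith
    · have hF : 0 ≤ (1-2*d)*r - u := by
        have h2d : 1-2*d = γ := by rw [hddef]; ring
        rw [h2d]; linarith
      have hER : R ≤ r + u := by nlinarith
      have hbrk : 0 ≤ 2*d*(r+u)+2*(1-d)*u - d*R := by nlinarith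
      have hident : (1-d)^2*(a^2 - R^2) =
          (r+u)*((1-2*d)*r - u) + d*R*(2*d*(r+u)+2*(1-d)*u - d*R)
          + 2*d*(1-d)^2*(t*(r+t)) := by
        rw [hsq, hRdef, hudef]; ring
      have hterm1 : 0 ≤ (r+u)*((1-2*d)*r - u) := mul_nonneg (by linarith) hF
      have hterm2 : 0 ≤ d*R*(2*d*(r+u)+2*(1-d)*u - d*R) :=
        mul_nonneg (mul_nonneg hd0.le hR.le) hbrk
      have hterm3 : 0 ≤ 2*d*(1-d)^2*(t*(r+t)) := by positivity
      have h1d : (0:ℝ) < (1-d)^2 := by nlinarith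
      have hnn : 0 ≤ (1-d)^2*(a^2 - R^2) := by rw [hident]; linarith
      have hsq2 : R^2 ≤ a^2 := by
        by_contra h
        push_neg at h
        have : (1-d)^2*(a^2-R^2) < 0 := mul_neg_of_pos_of_neg h1d (by linarith)
        linarith
      have haR : R ≤ a := by
        have h' := Real.sqrt_le_sqrt hsq2
        rwa [Real.sqrt_sq hR.le, Real.sqrt_sq ha] at h'
      linarith

lemma re_half_pow_nonneg (z : ℂ) : 0 ≤ (z ^ (1/2 : ℂ)).re := by
  rcases eq_or_ne z 0 with rfl | hz
  · rw [Complex.zero_cpow (by norm_num)]; simp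
  · rw [Complex.cpow_def_of_ne_zero hz, Complex.exp_re]
    have him : (Complex.log z * (1/2 : ℂ)).im = z.arg / 2 := by
      simp [Complex.mul_im, Complex.log_im]; ring
    rw [him]
    have h1 : -(Real.pi/2) ≤ z.arg / 2 := by have := Complex.neg_pi_lt_arg z; linarith
    have h2 : z.arg / 2 ≤ Real.pi/2 := by have := Complex.arg_le_pi z; linarith
    exact mul_nonneg (Real.exp_nonneg _) (Real.cos_nonneg_of_mem_Icc ⟨h1, h2⟩)

lemma half_pow_mul_self {z : ℂ} (hz : z ≠ 0) : z ^ (1/2:ℂ) * z ^ (1/2:ℂ) = z := by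
  rw [← Complex.cpow_add _ _ hz]; norm_num

lemma two_re_sq (s : ℂ) : 2 * s.re^2 = ‖s*s‖ + (s*s).re := by
  rw [norm_mul, Complex.mul_re, ← sq ‖s‖, Complex.sq_norm, Complex.normSq_apply]; ring

lemma shifted_ne_zero (c γ : ℝ) (hc : 0 < c) (hγ1 : γ < 1) (l : ℂ) (hl : l ≠ 0)
    (hre : -(γ * ‖l‖) ≤ l.re) (x : ℝ) :
    (c:ℂ)⁻¹ * l + (x:ℂ)^2 ≠ 0 := by
  intro h0
  have hcC : (c:ℂ) ≠ 0 := Complex.ofReal_ne_zero.mpr hc.ne'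
  have hl2 : l = ((-(c*x^2) : ℝ) : ℂ) := by
    field_simp at h0
    push_cast
    linear_combination h0
  have h1 : ‖l‖ = c*x^2 := by
    rw [hl2, Complex.norm_real, Real.norm_eq_abs, abs_neg, abs_of_nonneg (by positivity)]
  have h2 : l.re = -(c*x^2) := by rw [hl2, Complex.ofReal_re]
  have h3 : 0 < ‖l‖ := norm_pos_iff.mpr hl
  nlinarith [hre]

lemma re_sqrt_ge (c γ : ℝ) (hc : 0 < c) (hγ0 : 0 ≤ γ) (hγ1 : γ < 1)
    (l : ℂ) (hl : l ≠ 0) (hre : -(γ * ‖l‖) ≤ l.re) (x : ℝ) (hx : 0 ≤ x) :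
    Real.sqrt ((1-γ)/2 * min c⁻¹ 1 / 4) * (Real.sqrt (‖l‖) + x)
      ≤ (((c:ℂ)⁻¹ * l + (x:ℂ)^2) ^ (1/2:ℂ)).re := by
  have hcinv : (0:ℝ) < c⁻¹ := inv_pos.mpr hc
  set z : ℂ := (c:ℂ)⁻¹ * l with hzdef
  have hcast : ((c:ℂ))⁻¹ = ((c⁻¹:ℝ):ℂ) := by push_cast; ring
  have habs : ‖z‖ = c⁻¹ * ‖l‖ := by
    rw [hzdef, norm_mul, hcast, Complex.norm_real, Real.norm_eq_abs, abs_of_pos hcinv]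
  have hzre : z.re = c⁻¹ * l.re := by
    rw [hzdef, hcast, Complex.re_ofReal_mul]
  have hrez : -(γ * ‖z‖) ≤ z.re := by
    rw [habs, hzre]
    have h := mul_le_mul_of_nonneg_left hre hcinv.le
    calc -(γ * (c⁻¹ * ‖l‖)) = c⁻¹ * -(γ * ‖l‖) := by ring
    _ ≤ c⁻¹ * l.re := h
  have hx2 : ((x:ℂ))^2 = (((x^2:ℝ)):ℂ) := by push_cast; ring
  have hwne : z + ((x^2:ℝ):ℂ) ≠ 0 := by
    rw [hzdef, ← hx2]; exact shifted_ne_zero c γ hc hγ1 l hl hre x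
  have hsec := sector_add γ hγ0 hγ1 z (x^2) (by positivity) hrez
  set w : ℂ := z + ((x^2:ℝ):ℂ) with hwdef
  set s := w ^ (1/2:ℂ) with hsdef
  have hs0 : 0 ≤ s.re := re_half_pow_nonneg w
  have hss : s * s = w := half_pow_mul_self hwne
  have h2 : 2 * s.re^2 = ‖w‖ + w.re := by rw [two_re_sq s, hss]
  set A := ‖l‖ with hAdef
  have hA0 : 0 ≤ A := norm_nonneg l
  set m : ℝ := min c⁻¹ 1 with hmdef
  have hm0 : 0 < m := lt_min hcinv one_pos
  have hstep0 : m*(A + x^2) ≤ c⁻¹*A + x^2 := by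
    have h1 : m ≤ c⁻¹ := min_le_left _ _
    have h2' : m ≤ 1 := min_le_right _ _
    nlinarith [sq_nonneg x]
  have hstep1 : (1-γ)/2 * (m*(A + x^2)) ≤ ‖w‖ + w.re := by
    calc (1-γ)/2 * (m*(A + x^2)) ≤ (1-γ)/2 * (c⁻¹*A + x^2) :=
          mul_le_mul_of_nonneg_left hstep0 (by linarith)
    _ = (1-γ)/2 * (‖z‖ + x^2) := by rw [habs]
    _ ≤ ‖w‖ + w.re := hsec
  have hsum : (Real.sqrt A + x)^2 ≤ 2*(A + x^2) := by
    have h1 : Real.sqrt A ^ 2 = A := Real.sq_sqrt hA0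
    nlinarith [sq_nonneg (Real.sqrt A - x)]
  have hc4 : (0:ℝ) ≤ (1-γ)/2 * m / 4 := by
    have : (0:ℝ) ≤ (1-γ)/2 := by linarith
    positivity
  have hKsq : Real.sqrt ((1-γ)/2 * m / 4) ^ 2 = (1-γ)/2 * m / 4 := Real.sq_sqrt hc4
  have h3 := mul_le_mul_of_nonneg_left hsum hc4
  have hgoal2 : (Real.sqrt ((1-γ)/2 * m / 4) * (Real.sqrt A + x))^2 ≤ s.re^2 := by
    rw [mul_pow, hKsq]; nlinarith [h3, hstep1, h2]
  have hKu : 0 ≤ Real.sqrt ((1-γ)/2 * m / 4) * (Real.sqrt A + x) :=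
    mul_nonneg (Real.sqrt_nonneg _) (by positivity)
  have hfin := Real.sqrt_le_sqrt hgoal2
  rw [Real.sqrt_sq hKu, Real.sqrt_sq hs0] at hfin
  have hform : ((c:ℂ)⁻¹ * l + (x:ℂ)^2) = w := by rw [hwdef, hzdef, hx2]
  rw [hform]
  exact hfin


/-- The characteristic root `A = ((α+β)⁻¹ λ + |ξ'|²)^{1/2}` (principal square root),
written as a function of `|ξ'|`. -/
noncomputable def lameA (α β : ℝ) (l : ℂ) (x : ℝ) : ℂ :=
  (((α + β : ℝ) : ℂ)⁻¹ * l + (x : ℂ) ^ 2) ^ (1 / 2 : ℂ)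

/-- The characteristic root `B = (α⁻¹ λ + |ξ'|²)^{1/2}` (principal square root),
written as a function of `|ξ'|`. -/
noncomputable def lameB (α : ℝ) (l : ℂ) (x : ℝ) : ℂ :=
  ((α : ℂ)⁻¹ * l + (x : ℂ) ^ 2) ^ (1 / 2 : ℂ)

/-- the symbol `m₃ = B − A` is `O(|λ|(|λ|^{1/2}+|ξ'|)^{-1})` on the sector. -/
theorem symbol_m3_bound
    (N : ℕ) (hN : 2 ≤ N) (ε α β : ℝ)
    (hε0 : 0 < ε) (hε1 : ε < Real.pi / 2) (hα : 0 < α) (hαβ : 0 < α + β) :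
    ∃ C : ℝ, 0 < C ∧
      ∀ l : ℂ, l ≠ 0 → |Complex.arg l| ≤ Real.pi - ε →
        ∀ ξ' : EuclideanSpace ℝ (Fin (N - 1)),
          ‖lameB α l ‖ξ'‖ - lameA α β l ‖ξ'‖‖ ≤
            C * ‖l‖ * (Real.sqrt (‖l‖) + ‖ξ'‖)⁻¹ := by
  set γ : ℝ := Real.cos ε with hγdef
  have hγ0 : 0 ≤ γ := by
    rw [hγdef]
    apply Real.cos_nonneg_of_mem_Icc
    constructor <;> [linarith [Real.pi_pos]; linarith]
  have hγ1 : γ < 1 := by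
    rw [hγdef]
    have h := Real.cos_lt_cos_of_nonneg_of_le_pi (le_refl (0:ℝ))
      (by linarith [Real.pi_pos] : ε ≤ Real.pi) hε0
    simpa using h
  set K : ℝ := Real.sqrt ((1-γ)/2 * min (α+β)⁻¹ 1 / 4) with hKdef
  have hK : 0 < K := by
    rw [hKdef]
    apply Real.sqrt_pos.mpr
    have h1 : (0:ℝ) < (1-γ)/2 := by linarith
    have h2 : (0:ℝ) < min (α+β)⁻¹ 1 := lt_min (inv_pos.mpr hαβ) one_pos
    positivity
  set q : ℝ := |α⁻¹ - (α+β)⁻¹| with hqdef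
  refine ⟨(q+1)/K, by positivity, ?_⟩
  intro l hl harg ξ'
  set x : ℝ := ‖ξ'‖ with hxdef
  have hx : 0 ≤ x := norm_nonneg _
  -- sector condition gives re bound
  have hre : -(γ * ‖l‖) ≤ l.re := by
    have habs : 0 < ‖l‖ := norm_pos_iff.mpr hl
    have hcos : Real.cos (Real.pi - ε) ≤ Real.cos |Complex.arg l| :=
      Real.cos_le_cos_of_nonneg_of_le_pi (abs_nonneg _) (by linarith) harg
    rw [Real.cos_pi_sub, Real.cos_abs, Complex.cos_arg hl] at hcos
    have := mul_le_mul_of_nonneg_left hcos habs.le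
    rw [mul_div_cancel₀ _ habs.ne'] at this
    calc -(γ * ‖l‖) = ‖l‖ * -γ := by ring
    _ ≤ l.re := this
  have hu : 0 < Real.sqrt (‖l‖) + x := by
    have : 0 < Real.sqrt (‖l‖) := Real.sqrt_pos.mpr (norm_pos_iff.mpr hl)
    linarith
  set u : ℝ := Real.sqrt (‖l‖) + x with hudef
  -- the two roots
  set sA : ℂ := lameA α β l x with hsAdef
  set sB : ℂ := lameB α l x with hsBdef
  have hZAne : ((α+β:ℝ):ℂ)⁻¹ * l + (x:ℂ)^2 ≠ 0 :=
    shifted_ne_zero (α+β) γ hαβ hγ1 l hl hre x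
  have hZBne : ((α:ℝ):ℂ)⁻¹ * l + (x:ℂ)^2 ≠ 0 :=
    shifted_ne_zero α γ hα hγ1 l hl hre x
  have hA2 : sA * sA = ((α+β:ℝ):ℂ)⁻¹ * l + (x:ℂ)^2 := half_pow_mul_self hZAne
  have hB2 : sB * sB = ((α:ℝ):ℂ)⁻¹ * l + (x:ℂ)^2 := half_pow_mul_self hZBne
  have hAre : K * u ≤ sA.re :=
    re_sqrt_ge (α+β) γ hαβ hγ0 hγ1 l hl hre x hx
  have hBre : 0 ≤ sB.re := re_half_pow_nonneg _
  have hDre : K * u ≤ (sB + sA).re := by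
    rw [Complex.add_re]; linarith
  have hKu : 0 < K * u := mul_pos hK hu
  have hDpos : 0 < ‖sB + sA‖ := by
    have h1 : (sB + sA).re ≤ ‖sB + sA‖ := Complex.re_le_norm _
    linarith
  have hDne : sB + sA ≠ 0 := by
    intro h; rw [h] at hDpos; simp at hDpos
  have hdiff : sB - sA = (((α:ℝ):ℂ)⁻¹ - ((α+β:ℝ):ℂ)⁻¹) * l / (sB + sA) := by
    rw [eq_div_iff hDne]
    linear_combination hB2 - hA2
  have hqc : ‖(((α:ℝ):ℂ)⁻¹ - ((α+β:ℝ):ℂ)⁻¹) * l‖ = q * ‖l‖ := by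
    rw [norm_mul]
    congr 1
    rw [show (((α:ℝ):ℂ)⁻¹ - ((α+β:ℝ):ℂ)⁻¹) = (((α⁻¹ - (α+β)⁻¹ : ℝ)):ℂ) by push_cast; ring,
      Complex.norm_real, Real.norm_eq_abs, hqdef]
  have habseq : ‖sB - sA‖ = q * ‖l‖ / ‖sB + sA‖ := by
    rw [hdiff, norm_div, hqc]
  rw [habseq]
  have hnum : q * ‖l‖ ≤ (q+1) * ‖l‖ := by
    have : 0 ≤ ‖l‖ := norm_nonneg l
    nlinarith
  calc q * ‖l‖ / ‖sB + sA‖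
      ≤ q * ‖l‖ / (K * u) := by
        apply div_le_div_of_nonneg_left ?_ hKu ?_
        · positivity
        · linarith [Complex.re_le_norm (sB + sA)]
    _ ≤ (q+1) * ‖l‖ / (K * u) := by
        exact (div_le_div_iff_of_pos_right hKu).mpr hnum
    _ = (q+1)/K * ‖l‖ * u⁻¹ := by
        field_simp
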